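/- arXiv:0811.3620 — 4 statements merged into one kernel-verified Lean document; each statement's English description precedes it below -/
import Mathlib

section
/- For the repository R_n with packages a_1,...,a_n and b_1,...,b_n, where each a_i depends on the single disjunctive dependency {b_1,...,b_{i-1},b_{i+1},...,b_n}, each b_i has no dependencies, and any two distinct b_i, b_j conflict, the full set {a_1,...,a_n} is not co-installable whenever n ≥ 2. -/
def Healthy {α : Type*} (D : α → Set (Set α)) (C : Set (α × α)) (I : Set α) : Prop :=
  (∀ π ∈ I, ∀ d ∈ D π, (I ∩ d).Nonempty) ∧ ∀ p ∈ I, ∀ q ∈ I, (p, q) ∉ C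

def Coinstallable {α : Type*} (D : α → Set (Set α)) (C : Set (α × α)) (s : Set α) : Prop :=
  ∃ I, Healthy D C I ∧ s ⊆ I

def Installable {α : Type*} (D : α → Set (Set α)) (C : Set (α × α)) (π : α) : Prop :=
  Coinstallable D C {π}


def Dn (n : ℕ) : Fin n ⊕ Fin n → Set (Set (Fin n ⊕ Fin n))
  | Sum.inl i => {{p | ∃ j : Fin n, j ≠ i ∧ p = Sum.inr j}}
  | Sum.inr _ => ∅

def Cn (n : ℕ) : Set ((Fin n ⊕ Fin n) × (Fin n ⊕ Fin n)) :=
  {q | ∃ i j : Fin n, i ≠ j ∧ q = (Sum.inr i, Sum.inr j)}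

/-!
A healthy installation of `R_n` contains at most one `b_j`. If it contains `a_i`, it contains
some `b_j` with `j ≠ i`; if it also contains `a_j`, it needs a second `b_k` with `k ≠ j`.
-/

namespace Healthy

variable {n : ℕ} {I : Set (Fin n ⊕ Fin n)}

theorem exists_inr_ne_mem (hI : Healthy (Dn n) (Cn n) I) {i : Fin n} (hi : Sum.inl i ∈ I) :
    ∃ j, j ≠ i ∧ Sum.inr j ∈ I := by
  obtain ⟨_, hpI, j, hji, rfl⟩ := hI.1 (Sum.inl i) hi _ rfl
  exact ⟨j, hji, hpI⟩

theorem inr_eq_of_mem (hI : Healthy (Dn n) (Cn n) I) {i j : Fin n}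
    (hi : Sum.inr i ∈ I) (hj : Sum.inr j ∈ I) : i = j := by
  by_contra hij
  exact hI.2 _ hi _ hj ⟨i, j, hij, rfl⟩

end Healthy

theorem stmt0 (n : ℕ) (hn : 2 ≤ n) :
    ¬ Coinstallable (Dn n) (Cn n) {p | ∃ i : Fin n, p = Sum.inl i} := by
  rintro ⟨I, hI, hsub⟩
  have inl_mem (i : Fin n) : Sum.inl i ∈ I := hsub ⟨i, rfl⟩
  obtain ⟨j, -, hj⟩ := hI.exists_inr_ne_mem (inl_mem ⟨0, by omega⟩)
  obtain ⟨k, hkj, hk⟩ := hI.exists_inr_ne_mem (inl_mem j)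
  exact hkj (hI.inr_eq_of_mem hk hj)
end

section
/- For the repository R_n as above, every proper subset of {a_1,...,a_n} is co-installable. Hence for every n there exists a repository containing a set of n packages that is not co-installable but all of whose proper subsets are co-installable; in particular, minimal non-co-installable sets can be arbitrarily large. -/
/-!
Each `a_i` needs some `b_j` with `j ≠ i`, and at most one `b` can be installed. Dropping `a_k`
leaves a healthy installation: the other `a_i` together with `b_k`. If all `a_i` are installed
(and `n ≥ 1`), `a_0` forces some `b_j`, and then `a_j` forces a `b_k` with `k ≠ j`: two distinct
`b`'s conflict.
-/

namespace Dn

variable {n : ℕ} {I : Set (Fin n ⊕ Fin n)}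

theorem exists_inr_ne_of_healthy (hI : Healthy (Dn n) (Cn n) I) {i : Fin n}
    (hi : Sum.inl i ∈ I) : ∃ j ≠ i, Sum.inr j ∈ I := by
  obtain ⟨_, hjI, j, hji, rfl⟩ := hI.1 _ hi _ rfl
  exact ⟨j, hji, hjI⟩

theorem inr_eq_of_healthy (hI : Healthy (Dn n) (Cn n) I) {i j : Fin n}
    (hi : Sum.inr i ∈ I) (hj : Sum.inr j ∈ I) : i = j := by
  by_contra hij
  exact hI.2 _ hi _ hj ⟨i, j, hij, rfl⟩

def installWithout (k : Fin n) : Set (Fin n ⊕ Fin n) :=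
  {p | ∃ i, i ≠ k ∧ p = Sum.inl i} ∪ {Sum.inr k}

theorem healthy_installWithout (k : Fin n) : Healthy (Dn n) (Cn n) (installWithout k) := by
  refine ⟨?_, ?_⟩
  · rintro _ (⟨i, hik, rfl⟩ | rfl) d hd
    · rw [Dn, Set.mem_singleton_iff] at hd
      exact ⟨Sum.inr k, Or.inr rfl, hd ▸ ⟨k, Ne.symm hik, rfl⟩⟩
    · simp [Dn] at hd
  · rintro _ (⟨_, _, rfl⟩ | rfl) _ (⟨_, _, rfl⟩ | rfl) ⟨i, j, hij, h⟩ <;>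
      simp only [Prod.mk.injEq, reduceCtorEq, Sum.inr.injEq, false_and, and_false] at h
    exact hij (h.1 ▸ h.2)

theorem coinstallable_of_inl_notMem {s : Set (Fin n ⊕ Fin n)}
    (hs : s ⊆ {p | ∃ i : Fin n, p = Sum.inl i}) {k : Fin n} (hk : Sum.inl k ∉ s) :
    Coinstallable (Dn n) (Cn n) s := by
  refine ⟨installWithout k, healthy_installWithout k, fun p hp => Or.inl ?_⟩
  obtain ⟨i, rfl⟩ := hs hp
  exact ⟨i, by rintro rfl; exact hk hp, rfl⟩

theorem not_coinstallable_all_inl (hn : 0 < n) :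
    ¬ Coinstallable (Dn n) (Cn n) {p | ∃ i : Fin n, p = Sum.inl i} := by
  rintro ⟨I, hI, hsub⟩
  have hall (i : Fin n) : Sum.inl i ∈ I := hsub ⟨i, rfl⟩
  obtain ⟨j, -, hjI⟩ := exists_inr_ne_of_healthy hI (hall ⟨0, hn⟩)
  obtain ⟨k, hkj, hkI⟩ := exists_inr_ne_of_healthy hI (hall j)
  exact hkj (inr_eq_of_healthy hI hkI hjI)

end Dn

theorem stmt1 (n : ℕ) :
    (∀ s : Set (Fin n ⊕ Fin n), s ⊂ {p | ∃ i : Fin n, p = Sum.inl i} →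
      Coinstallable (Dn n) (Cn n) s) ∧
    (2 ≤ n → ¬ Coinstallable (Dn n) (Cn n) {p | ∃ i : Fin n, p = Sum.inl i}) := by
  refine ⟨fun s hs => ?_, fun hn => Dn.not_coinstallable_all_inl (by omega)⟩
  obtain ⟨_, ⟨k, rfl⟩, hk⟩ := Set.exists_of_ssubset hs
  exact Dn.coinstallable_of_inl_notMem hs.subset hk
end

section
/- In the repository R_n, every individual package is installable: for each a_i there is a healthy installation containing a_i (namely {a_i} ∪ {b_j} for any fixed j ≠ i), and each b_i is installable via {b_i}. Thus installability of every member of a set does not imply co-installability of the set. -/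
section General

variable {α : Type*} {D : α → Set (Set α)} {C : Set (α × α)}

theorem Healthy.installable {I : Set α} (hI : Healthy D C I) {π : α} (hπ : π ∈ I) :
    Installable D C π :=
  ⟨I, hI, Set.singleton_subset_iff.mpr hπ⟩

theorem healthy_singleton {π : α} (hD : D π = ∅) (hC : (π, π) ∉ C) : Healthy D C {π} := by
  refine ⟨?_, ?_⟩
  · rintro _ rfl d hd
    simp [hD] at hd
  · rintro _ rfl _ rfl
    exact hC

end General

section Rn

variable {n : ℕ}

theorem mem_Cn_iff {p q : Fin n ⊕ Fin n} :
    (p, q) ∈ Cn n ↔ ∃ i j : Fin n, i ≠ j ∧ p = Sum.inr i ∧ q = Sum.inr j := by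
  simp [Cn]

theorem healthy_Rn_inr (i : Fin n) : Healthy (Dn n) (Cn n) {Sum.inr i} :=
  healthy_singleton rfl fun h => by
    obtain ⟨_, _, hne, h₁, h₂⟩ := mem_Cn_iff.mp h
    exact hne (Sum.inr_injective (h₁.symm.trans h₂))

theorem healthy_Rn_inl_inr {i j : Fin n} (hji : j ≠ i) :
    Healthy (Dn n) (Cn n) {Sum.inl i, Sum.inr j} := by
  refine ⟨?_, ?_⟩
  · rintro π (rfl | rfl) d hd
    · rw [Dn, Set.mem_singleton_iff] at hd
      subst hd
      exact ⟨Sum.inr j, Or.inr rfl, j, hji, rfl⟩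
    · simp [Dn] at hd
  · rintro p hp q hq h
    obtain ⟨k, l, hkl, rfl, rfl⟩ := mem_Cn_iff.mp h
    simp only [Set.mem_insert_iff, Set.mem_singleton_iff, reduceCtorEq, Sum.inr.injEq,
      false_or] at hp hq
    exact hkl (hp.trans hq.symm)

theorem Healthy.exists_inr_mem_Rn {I : Set (Fin n ⊕ Fin n)} (hI : Healthy (Dn n) (Cn n) I)
    {i : Fin n} (hi : Sum.inl i ∈ I) : ∃ j ≠ i, Sum.inr j ∈ I := by
  obtain ⟨_, hjI, j, hji, rfl⟩ := hI.1 _ hi _ rfl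
  exact ⟨j, hji, hjI⟩

theorem not_coinstallable_Rn_inl [Nonempty (Fin n)] :
    ¬ Coinstallable (Dn n) (Cn n) {p | ∃ i : Fin n, p = Sum.inl i} := by
  rintro ⟨I, hI, hsub⟩
  obtain ⟨j, -, hj⟩ := hI.exists_inr_mem_Rn (hsub ⟨Classical.arbitrary (Fin n), rfl⟩)
  obtain ⟨k, hkj, hk⟩ := hI.exists_inr_mem_Rn (hsub ⟨j, rfl⟩)
  exact hI.2 _ hk _ hj (mem_Cn_iff.mpr ⟨k, j, hkj, rfl, rfl⟩)

end Rn

theorem stmt2 (n : ℕ) (hn : 2 ≤ n) :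
    (∀ i j : Fin n, j ≠ i →
      Healthy (Dn n) (Cn n) {Sum.inl i, Sum.inr j} ∧
      Installable (Dn n) (Cn n) (Sum.inl i)) ∧
    (∀ i : Fin n,
      Healthy (Dn n) (Cn n) {Sum.inr i} ∧ Installable (Dn n) (Cn n) (Sum.inr i)) ∧
    ¬ Coinstallable (Dn n) (Cn n) {p | ∃ i : Fin n, p = Sum.inl i} := by
  have : Nonempty (Fin n) := ⟨⟨0, by omega⟩⟩
  refine ⟨fun i j hji => ?_, fun i => ?_, not_coinstallable_Rn_inl⟩
  · have hI := healthy_Rn_inl_inr hji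
    exact ⟨hI, hI.installable (Set.mem_insert _ _)⟩
  · have hI := healthy_Rn_inr i
    exact ⟨hI, hI.installable rfl⟩
end

section
/- A package π is installable in repository R if and only if the Boolean formula φ_R ∧ x_π is satisfiable, where φ_R is the conjunction, over all packages p and dependencies d ∈ D(p), of the implication x_p → ⋁_{q ∈ d} x_q, together with, for each conflict (p, q) ∈ C, the clause ¬(x_p ∧ x_q). (Here P is finite, and a satisfying assignment corresponds to the installation of packages whose variables are true.) -/
def Sat {α : Type*} (D : α → Set (Set α)) (C : Set (α × α)) (σ : α → Bool) : Prop :=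
  (∀ p, σ p = true → ∀ d ∈ D p, ∃ q ∈ d, σ q = true) ∧
  ∀ p q, (p, q) ∈ C → ¬(σ p = true ∧ σ q = true)

theorem sat_iff_healthy {α : Type*} {D : α → Set (Set α)} {C : Set (α × α)} {σ : α → Bool} :
    Sat D C σ ↔ Healthy D C {p | σ p = true} := by
  refine and_congr (forall₃_congr fun _ _ _ => forall_congr' fun _ => ?_) ?_
  · exact ⟨fun ⟨q, hqd, hq⟩ => ⟨q, hq, hqd⟩, fun ⟨q, hq, hqd⟩ => ⟨q, hqd, hq⟩⟩
  · exact ⟨fun h p hp q hq hC => h p q hC ⟨hp, hq⟩, fun h p q hC ⟨hp, hq⟩ => h p hp q hq hC⟩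

theorem healthy_iff_sat_decide_mem {α : Type*} {D : α → Set (Set α)} {C : Set (α × α)}
    {I : Set α} [DecidablePred (· ∈ I)] : Healthy D C I ↔ Sat D C (fun p => decide (p ∈ I)) := by
  simp only [sat_iff_healthy, decide_eq_true_eq, Set.ofPred_mem_eq]

theorem stmt7_general {α : Type*} (D : α → Set (Set α)) (C : Set (α × α)) (π : α) :
    Installable D C π ↔ ∃ σ : α → Bool, Sat D C σ ∧ σ π = true := by
  classical
  constructor
  · rintro ⟨I, hI, hπ⟩
    exact ⟨fun p => decide (p ∈ I), healthy_iff_sat_decide_mem.1 hI, by simpa using hπ⟩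
  · rintro ⟨σ, hσ, hπ⟩
    exact ⟨{p | σ p = true}, sat_iff_healthy.1 hσ, by simpa using hπ⟩

theorem stmt7 {α : Type*} [Fintype α] (D : α → Set (Set α)) (C : Set (α × α))
    (hSym : ∀ p q, (p, q) ∈ C → (q, p) ∈ C) (π : α) :
    Installable D C π ↔ ∃ σ : α → Bool, Sat D C σ ∧ σ π = true :=
  stmt7_general D C π
end
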